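/- arXiv:2309.09634 — 3 statements merged into one kernel-verified Lean document; each statement's English description precedes it below -/
import Mathlib

section
/- Let g : ℝ^m → ℝ be a C^{1,α*} function for some α* ∈ (0,1], with the property that g(x) = 0 implies ∇g(x) = 0 for every x ∈ ℝ^m. Then for every x ∈ ℝ^m, |∇g(x)| ≤ 2·max{1, [∇g]_{C^{0,α*}}} · |g(x)|^{α*/(1+α*)}. -/
/-!
Let `D = ‖∇g(x)‖ > 0` with `g x > 0`, and let `t` be the radius at which the Hölder bound
`M t^α` equals `D / 2`. On the ball of radius `t` the gradient stays within `D / 2` of `∇g(x)`,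
so it never vanishes there, and hence neither does `g`: the ball is connected and `g x > 0`,
so `g > 0` on it. Walking the distance `t` against the gradient lowers `g` by at least `D t / 2`,
so `D t ≤ 2 g(x)`, which unwinds to `D ≤ 2 M^{1/(1+α)} g(x)^{α/(1+α)}`. Negative values are
handled by passing to `-g`.
-/

open Metric Real

theorem le_two_mul_rpow_of_mul_rpow_div_le {D M G α : ℝ} (hD : 0 ≤ D) (hM : 0 < M) (hα : 0 < α)
    (h : D * (D / (2 * M)) ^ (1 / α) ≤ 2 * G) :
    D ≤ 2 * M ^ (1 / (1 + α)) * G ^ (α / (1 + α)) := by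
  set s := D / (2 * M)
  have hs : 0 ≤ s := by positivity
  have hDs : D = 2 * M * s := by simp only [s]; field_simp
  have hG : M * s ^ ((1 + α) / α) ≤ G := by
    have : s ^ ((1 + α) / α) = s * s ^ (1 / α) := by
      rw [add_div, div_self hα.ne', rpow_add' hs (by positivity), rpow_one, mul_comm]
    rw [hDs] at h
    rw [this]
    linarith
  have hGpow : M ^ (α / (1 + α)) * s ≤ G ^ (α / (1 + α)) :=
    calc M ^ (α / (1 + α)) * s = (M * s ^ ((1 + α) / α)) ^ (α / (1 + α)) := by
          rw [mul_rpow hM.le (by positivity), ← rpow_mul hs,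
            div_mul_div_cancel₀ hα.ne', div_self (by positivity), rpow_one]
      _ ≤ G ^ (α / (1 + α)) := rpow_le_rpow (by positivity) hG (by positivity)
  calc D = 2 * M ^ (1 / (1 + α)) * (M ^ (α / (1 + α)) * s) := by
        rw [← mul_assoc, mul_assoc 2, ← rpow_add hM, ← add_div, div_self (by positivity),
          rpow_one, hDs]
    _ ≤ 2 * M ^ (1 / (1 + α)) * G ^ (α / (1 + α)) := by gcongr

variable {E : Type*} [NormedAddCommGroup E] [InnerProductSpace ℝ E]

theorem exists_norm_eq_one_apply_eq_norm [CompleteSpace E] (f : E →L[ℝ] ℝ) (hf : f ≠ 0) :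
    ∃ v : E, ‖v‖ = 1 ∧ f v = ‖f‖ := by
  set w := (InnerProductSpace.toDual ℝ E).symm f
  have hw : ‖w‖ = ‖f‖ := LinearIsometryEquiv.norm_map _ f
  have hf' : ‖f‖ ≠ 0 := norm_ne_zero_iff.mpr hf
  refine ⟨‖f‖⁻¹ • w, ?_, ?_⟩
  · rw [norm_smul, hw, norm_inv, norm_norm, inv_mul_cancel₀ hf']
  · have hfw : f w = ‖f‖ ^ 2 := by
      rw [← InnerProductSpace.toDual_symm_apply, real_inner_self_eq_norm_sq, hw]
    rw [map_smul, smul_eq_mul, hfw]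
    field_simp

theorem exists_mem_closedBall_le_sub_of_norm_fderiv_sub_le [CompleteSpace E] {g : E → ℝ}
    (hg : Differentiable ℝ g) {x : E} {t : ℝ} (ht : 0 ≤ t)
    (hclose : ∀ y ∈ closedBall x t, ‖fderiv ℝ g y - fderiv ℝ g x‖ ≤ ‖fderiv ℝ g x‖ / 2) :
    ∃ y ∈ closedBall x t, g y ≤ g x - ‖fderiv ℝ g x‖ * t / 2 := by
  set f := fderiv ℝ g x
  rcases eq_or_ne f 0 with hf | hf
  · exact ⟨x, mem_closedBall_self ht, by simp [hf]⟩
  obtain ⟨v, hv, hfv⟩ := exists_norm_eq_one_apply_eq_norm f hf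
  have hdist : ‖(x - t • v) - x‖ = t := by
    rw [sub_sub_cancel_left, norm_neg, norm_smul, hv, mul_one, Real.norm_of_nonneg ht]
  have hmem : x - t • v ∈ closedBall x t := mem_closedBall_iff_norm.mpr hdist.le
  have hmvt := (convex_closedBall x t).norm_image_sub_le_of_norm_fderiv_le
    (f := fun y => g y - f y) (fun y _ => (hg y).sub f.differentiableAt)
    (fun y hy => by rw [fderiv_fun_sub (hg y) f.differentiableAt, f.fderiv]; exact hclose y hy)
    (mem_closedBall_self ht) hmem
  have hlin : f (x - t • v) = f x - t * ‖f‖ := by rw [map_sub, map_smul, hfv, smul_eq_mul]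
  rw [hdist, hlin, Real.norm_eq_abs] at hmvt
  refine ⟨x - t • v, hmem, ?_⟩
  linarith [(abs_le.mp hmvt).2]

theorem norm_fderiv_le_of_pos [CompleteSpace E] {g : E → ℝ} (hg : Differentiable ℝ g)
    {α M : ℝ} (hα : 0 < α) (hM : 0 < M) {x : E}
    (hHolder : ∀ y, ‖fderiv ℝ g y - fderiv ℝ g x‖ ≤ M * ‖y - x‖ ^ α)
    (htouch : ∀ y, g y = 0 → fderiv ℝ g y = 0) (hx : 0 < g x) :
    ‖fderiv ℝ g x‖ ≤ 2 * M ^ (1 / (1 + α)) * g x ^ (α / (1 + α)) := by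
  set D := ‖fderiv ℝ g x‖
  set t := (D / (2 * M)) ^ (1 / α)
  have ht : 0 ≤ t := by positivity
  have hclose : ∀ y ∈ closedBall x t, ‖fderiv ℝ g y - fderiv ℝ g x‖ ≤ D / 2 := fun y hy =>
    calc ‖fderiv ℝ g y - fderiv ℝ g x‖ ≤ M * ‖y - x‖ ^ α := hHolder y
      _ ≤ M * t ^ α := by gcongr; exact mem_closedBall_iff_norm.mp hy
      _ = D / 2 := by
        rw [← rpow_mul (by positivity), one_div_mul_cancel hα.ne', rpow_one]
        field_simp
  obtain ⟨y, hy, hgy⟩ := exists_mem_closedBall_le_sub_of_norm_fderiv_sub_le hg ht hclose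
  have hdescent : D * t ≤ 2 * g x := by
    by_contra! hlarge
    obtain ⟨z, hz, hgz⟩ := (convex_closedBall x t).isPreconnected.intermediate_value hy
      (mem_closedBall_self ht) hg.continuous.continuousOn ⟨by linarith, hx.le⟩
    have hDz := hclose z hz
    rw [htouch z hgz, zero_sub, norm_neg] at hDz
    have hD0 : D = 0 := by linarith [norm_nonneg (fderiv ℝ g x)]
    rw [hD0, zero_mul] at hlarge
    linarith
  exact le_two_mul_rpow_of_mul_rpow_div_le (norm_nonneg _) hM hα hdescent

theorem norm_fderiv_le_abs_rpow [CompleteSpace E] {g : E → ℝ} (hg : Differentiable ℝ g)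
    {α M : ℝ} (hα : 0 < α) (hM : 0 < M) {x : E}
    (hHolder : ∀ y, ‖fderiv ℝ g y - fderiv ℝ g x‖ ≤ M * ‖y - x‖ ^ α)
    (htouch : ∀ y, g y = 0 → fderiv ℝ g y = 0) :
    ‖fderiv ℝ g x‖ ≤ 2 * M ^ (1 / (1 + α)) * |g x| ^ (α / (1 + α)) := by
  rcases lt_trichotomy (g x) 0 with hneg | hzero | hpos
  · have hHolder_neg : ∀ y, ‖fderiv ℝ (-g) y - fderiv ℝ (-g) x‖ ≤ M * ‖y - x‖ ^ α := fun y => by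
      rw [fderiv_neg, fderiv_neg, neg_sub_neg, norm_sub_rev]
      exact hHolder y
    have htouch_neg : ∀ y, (-g) y = 0 → fderiv ℝ (-g) y = 0 := fun y hy => by
      rw [fderiv_neg, htouch y (neg_eq_zero.mp hy), neg_zero]
    simpa [fderiv_neg, abs_of_neg hneg] using
      norm_fderiv_le_of_pos hg.neg hα hM hHolder_neg htouch_neg (neg_pos.mpr hneg)
  · rw [htouch x hzero, norm_zero]
    positivity
  · rw [abs_of_pos hpos]
    exact norm_fderiv_le_of_pos hg hα hM hHolder htouch hpos

theorem stmt1_general {m : ℕ} {αs : ℝ} (hαs : 0 < αs ∧ αs ≤ 1)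
    (g : EuclideanSpace ℝ (Fin m) → ℝ) (hg : ContDiff ℝ 1 g) {H : ℝ}
    (hHolder : ∀ x y, ‖fderiv ℝ g x - fderiv ℝ g y‖ ≤ H * ‖x - y‖ ^ αs)
    (htouch : ∀ x, g x = 0 → fderiv ℝ g x = 0) :
    ∀ x, ‖fderiv ℝ g x‖ ≤ 2 * max 1 H * |g x| ^ (αs / (1 + αs)) := by
  intro x
  have hM : 1 ≤ max 1 H := le_max_left 1 H
  have hHolder_max : ∀ y, ‖fderiv ℝ g y - fderiv ℝ g x‖ ≤ max 1 H * ‖y - x‖ ^ αs := fun y =>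
    (hHolder y x).trans (by gcongr; exact le_max_right 1 H)
  calc ‖fderiv ℝ g x‖
      ≤ 2 * max 1 H ^ (1 / (1 + αs)) * |g x| ^ (αs / (1 + αs)) :=
        norm_fderiv_le_abs_rpow (hg.differentiable one_ne_zero) hαs.1 (by positivity)
          hHolder_max htouch
    _ ≤ 2 * max 1 H * |g x| ^ (αs / (1 + αs)) := by
        gcongr
        exact rpow_le_self_of_one_le hM ((div_le_one (by linarith)).mpr (by linarith))

theorem stmt1 {m : ℕ} {αs : ℝ} (hαs : 0 < αs ∧ αs ≤ 1)
    (g : EuclideanSpace ℝ (Fin m) → ℝ) (hg : ContDiff ℝ 1 g) {H : ℝ} (hH : 0 ≤ H)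
    (hHolder : ∀ x y, ‖fderiv ℝ g x - fderiv ℝ g y‖ ≤ H * ‖x - y‖ ^ αs)
    (htouch : ∀ x, g x = 0 → fderiv ℝ g x = 0) :
    ∀ x, ‖fderiv ℝ g x‖ ≤ 2 * max 1 H * |g x| ^ (αs / (1 + αs)) :=
  stmt1_general hαs g hg hHolder htouch
end

section
/- Let g : ℝ → ℝ be continuously differentiable with g' globally α*-Hölder continuous for some α* ∈ (0,1], and suppose g(t) = 0 implies g'(t) = 0 for all t. If g(0) = R^{1+α*} for some R > 0 and g'(s) > C_g R^{α*} for all s ∈ [−R, 0], where C_g := max{1, [g']_{C^{0,α*}}}, then a contradiction follows; i.e., no such configuration exists. Equivalently: if g(0) = R^{1+α*} > 0 then g'(0) ≤ 2 C_g R^{α*}. -/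
/-!
Suppose `g' 0 > 2 C R^α` with `C = max 1 H`. Hölder continuity of `g'` keeps `g' > C R^α` on
all of `[-R, 0]`, so `g` grows by more than `C R^(1+α) ≥ R^(1+α) = g 0` across that interval and
hence `g (-R) ≤ 0`. By the intermediate value theorem `g` vanishes at some `t ∈ [-R, 0]`, where
`g' t = 0` by the touching condition — contradicting `g' t > 0`.
-/

open Set

theorem abs_sub_le_mul_rpow_of_holder {f : ℝ → ℝ} {α H C R x y : ℝ} (hα : 0 ≤ α)
    (hf : ∀ s t, |f s - f t| ≤ H * |s - t| ^ α) (hHC : H ≤ C) (hC : 0 ≤ C)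
    (hxy : |x - y| ≤ R) :
    |f x - f y| ≤ C * R ^ α :=
  calc |f x - f y| ≤ H * |x - y| ^ α := hf x y
    _ ≤ C * |x - y| ^ α := by gcongr
    _ ≤ C * R ^ α := by gcongr

/-- No differentiability is assumed: `deriv g s ≠ 0` already forces `g` to be differentiable
at `s`. -/
theorem exists_mem_Icc_eq_zero_of_lt_deriv {g : ℝ → ℝ} {a b c : ℝ} (hab : a ≤ b) (hc : 0 ≤ c)
    (hderiv : ∀ s ∈ Icc a b, c < deriv g s) (hgb : g b ∈ Icc 0 (c * (b - a))) :
    ∃ t ∈ Icc a b, g t = 0 := by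
  have hdiff : DifferentiableOn ℝ g (Icc a b) := fun s hs =>
    (differentiableAt_of_deriv_ne_zero (hc.trans_lt (hderiv s hs)).ne').differentiableWithinAt
  have hgrowth : c * (b - a) ≤ g b - g a :=
    (convex_Icc a b).mul_sub_le_image_sub_of_le_deriv hdiff.continuousOn
      (hdiff.mono interior_subset) (fun s hs => (hderiv s (interior_subset hs)).le)
      a (left_mem_Icc.2 hab) b (right_mem_Icc.2 hab) hab
  exact intermediate_value_Icc hab hdiff.continuousOn ⟨by linarith [hgb.2], hgb.1⟩

theorem stmt2_general {αs : ℝ} (hαs : 0 < αs ∧ αs ≤ 1) (g : ℝ → ℝ)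
    {H : ℝ}
    (hHolder : ∀ s t : ℝ, |deriv g s - deriv g t| ≤ H * |s - t| ^ αs)
    (htouch : ∀ t, g t = 0 → deriv g t = 0)
    {R : ℝ} (hR : 0 < R) (hg0 : g 0 = R ^ (1 + αs)) :
    deriv g 0 ≤ 2 * max 1 H * R ^ αs := by
  by_contra! hlarge
  set C := max 1 H
  have hC : 1 ≤ C := le_max_left 1 H
  have hCRα : 0 < C * R ^ αs := by positivity
  have hlow : ∀ s ∈ Icc (-R) 0, C * R ^ αs < deriv g s := fun s hs => by
    have hclose : |0 - s| ≤ R := abs_le.2 ⟨by linarith [hs.2], by linarith [hs.1]⟩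
    have := abs_sub_le_mul_rpow_of_holder hαs.1.le hHolder (le_max_right 1 H)
      (zero_le_one.trans hC) hclose
    linarith [le_abs_self (deriv g 0 - deriv g s)]
  have hg0_mem : g 0 ∈ Icc 0 (C * R ^ αs * (0 - -R)) := by
    rw [hg0, Real.rpow_add hR, Real.rpow_one]
    refine ⟨by positivity, ?_⟩
    calc R * R ^ αs ≤ C * (R * R ^ αs) := le_mul_of_one_le_left (by positivity) hC
      _ = C * R ^ αs * (0 - -R) := by ring
  obtain ⟨t, ht, hgt⟩ := exists_mem_Icc_eq_zero_of_lt_deriv (by linarith) hCRα.le hlow hg0_mem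
  linarith [htouch t hgt, hlow t ht]

theorem stmt2 {αs : ℝ} (hαs : 0 < αs ∧ αs ≤ 1) (g : ℝ → ℝ) (hg : ContDiff ℝ 1 g)
    {H : ℝ} (hH : 0 ≤ H)
    (hHolder : ∀ s t : ℝ, |deriv g s - deriv g t| ≤ H * |s - t| ^ αs)
    (htouch : ∀ t, g t = 0 → deriv g t = 0)
    {R : ℝ} (hR : 0 < R) (hg0 : g 0 = R ^ (1 + αs)) :
    deriv g 0 ≤ 2 * max 1 H * R ^ αs :=
  stmt2_general hαs g hHolder htouch hR hg0
end

section
/- Let A : ℝ^m → ℝⁿ be a linear map and let v ∈ ℝⁿ, regarded as the vector (0, v) ∈ ℝ^m × ℝⁿ. Let ϖ = graph(A) = {(x, Ax) : x ∈ ℝ^m}, with orthogonal projection p_ϖ. Then |p_ϖ((0,v))| ≤ (Lip(A)/√(1+Lip(A)²)) · |v|, where Lip(A) is the operator norm of A. -/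
/-!
The projection `p = (x, A x)` of `u = (0, v)` satisfies `‖p‖² = ⟪u, p⟫ = ⟪v, A x⟫ ≤ ‖v‖ ‖A x‖`,
and on the graph `‖A x‖ ≤ ‖A‖ ‖x‖` forces the vertical part `‖A x‖` to be at most
`‖A‖ / √(1 + ‖A‖²)` times `‖p‖ = √(‖x‖² + ‖A x‖²)`. Dividing by `‖p‖` gives the bound.
-/

open RealInnerProductSpace

theorem Submodule.norm_orthogonalProjectionOnto_le_of_inner_le {E : Type*}
    [NormedAddCommGroup E] [InnerProductSpace ℝ E] (K : Submodule ℝ E)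
    [K.HasOrthogonalProjection] (u : E) {c : ℝ} (hc : 0 ≤ c)
    (h : ∀ p ∈ K, ⟪u, p⟫ ≤ c * ‖p‖) :
    ‖(K.orthogonalProjectionOnto u : E)‖ ≤ c := by
  set p := K.orthogonalProjectionOnto u
  have hsq : ‖(p : E)‖ ^ 2 ≤ c * ‖(p : E)‖ :=
    calc ‖(p : E)‖ ^ 2 = ⟪(p : E), p⟫ := (real_inner_self_eq_norm_sq _).symm
      _ = ⟪u, p⟫ := K.inner_orthogonalProjectionOnto_eq_of_mem_right p u
      _ ≤ c * ‖(p : E)‖ := h p p.2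
  nlinarith [norm_nonneg (p : E)]

theorem Real.le_div_sqrt_one_add_sq_mul {L t a N : ℝ} (ha : 0 ≤ a) (hL : 0 ≤ L)
    (hN : 0 ≤ N) (hat : a ≤ L * t) (hNsq : N ^ 2 = t ^ 2 + a ^ 2) :
    a ≤ L / √(1 + L ^ 2) * N := by
  have hs : 0 < √(1 + L ^ 2) := Real.sqrt_pos.mpr (by positivity)
  rw [div_mul_eq_mul_div, le_div_iff₀ hs,
    ← pow_le_pow_iff_left₀ (by positivity) (by positivity) two_ne_zero,
    mul_pow, mul_pow, Real.sq_sqrt (by positivity), hNsq]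
  nlinarith [mul_le_mul hat hat ha (by nlinarith)]

theorem WithLp.norm_snd_le_of_snd_eq {𝕜 E F : Type*} [NontriviallyNormedField 𝕜]
    [SeminormedAddCommGroup E] [SeminormedAddCommGroup F] [NormedSpace 𝕜 E] [NormedSpace 𝕜 F]
    (A : E →L[𝕜] F) {p : WithLp 2 (E × F)} (hp : p.snd = A p.fst) :
    ‖p.snd‖ ≤ ‖A‖ / √(1 + ‖A‖ ^ 2) * ‖p‖ :=
  Real.le_div_sqrt_one_add_sq_mul (norm_nonneg _) (norm_nonneg _) (norm_nonneg _)
    (hp ▸ A.le_opNorm p.fst) (WithLp.prod_norm_sq_eq_of_L2 p)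

theorem stmt8 {m n : ℕ}
    (A : EuclideanSpace ℝ (Fin m) →L[ℝ] EuclideanSpace ℝ (Fin n))
    (v : EuclideanSpace ℝ (Fin n)) :
    let V := WithLp 2 (EuclideanSpace ℝ (Fin m) × EuclideanSpace ℝ (Fin n))
    let ϖ : Submodule ℝ V :=
      Submodule.comap (WithLp.linearEquiv 2 ℝ _).toLinearMap
        (LinearMap.graph (A : EuclideanSpace ℝ (Fin m) →ₗ[ℝ] EuclideanSpace ℝ (Fin n)))
    ‖(Submodule.orthogonalProjectionOnto ϖ ((WithLp.equiv 2 _).symm ((0 : EuclideanSpace ℝ (Fin m)), v)) : V)‖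
      ≤ (‖A‖ / Real.sqrt (1 + ‖A‖ ^ 2)) * ‖v‖ := by
  intro V ϖ
  refine ϖ.norm_orthogonalProjectionOnto_le_of_inner_le _ (by positivity) fun p hp => ?_
  have hgraph : p.snd = A p.fst := (LinearMap.mem_graph_iff _ _).mp hp
  calc ⟪(WithLp.equiv 2 _).symm ((0 : EuclideanSpace ℝ (Fin m)), v), p⟫ = ⟪v, p.snd⟫ := by
        simp [WithLp.prod_inner_apply]
    _ ≤ ‖v‖ * ‖p.snd‖ := real_inner_le_norm v _
    _ ≤ ‖v‖ * (‖A‖ / √(1 + ‖A‖ ^ 2) * ‖p‖) := by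
        gcongr; exact WithLp.norm_snd_le_of_snd_eq A hgraph
    _ = ‖A‖ / √(1 + ‖A‖ ^ 2) * ‖v‖ * ‖p‖ := by ring
end
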